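/- Assume ∫_{−∞}^∞ q(t) dt = ∞, so that d(x) is well-defined for every x ∈ ℝ. Then the following two conditions are equivalent: (i) for every a ∈ (0,∞), ∫_{x−a}^{x+a} q(t) dt → ∞ as |x| → ∞; (ii) d(x) → 0 as |x| → ∞. -/

import Mathlib

open MeasureTheory Filter Topology
open scoped ENNReal

/-- The function `d(x) = inf { d > 0 : ∫_{x-d}^{x+d} q = 2 }`. -/
noncomputable def dq (q : ℝ → ℝ) (x : ℝ) : ℝ :=
  sInf {d : ℝ | 0 < d ∧ ∫ t in x - d..x + d, q t = 2}

/-! For `δ > 0` we have `d(x) ≤ δ` iff `∫_{x-δ}^{x+δ} q ≥ 2`, by the intermediate value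
theorem for the continuous, unbounded function `d ↦ ∫_{x-d}^{x+d} q`. So (ii) says that every
window of fixed radius eventually carries mass `2`, which clearly follows from (i). Conversely,
`[x-a, x+a]` is the union of `n` windows of radius `a/n` centred in `[x-a, x+a]`, so its mass is
eventually at least `2n`. -/

open Set Metric Bornology

theorem Metric.eventually_cobounded_forall_closedBall {α : Type*} [PseudoMetricSpace α]
    {p : α → Prop} (h : ∀ᶠ y in cobounded α, p y) (r : ℝ) :
    ∀ᶠ x in cobounded α, ∀ y ∈ closedBall x r, p y := by
  have hbad : IsBounded {y | ¬p y} := isBounded_def.2 (h.mono fun y hy => not_not_intro hy)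
  filter_upwards [isBounded_def.1 (hbad.cthickening (δ := r))] with x hx y hy
  by_contra hpy
  exact hx (mem_cthickening_of_dist_le x y r _ hpy (dist_comm x y ▸ hy))

theorem MeasureTheory.LocallyIntegrable.intervalIntegrable {E : Type*} [NormedAddCommGroup E]
    {f : ℝ → E} {μ : Measure ℝ} (hf : LocallyIntegrable f μ) (a b : ℝ) :
    IntervalIntegrable f μ a b :=
  (hf.integrableOn_isCompact isCompact_uIcc).intervalIntegrable

variable {q : ℝ → ℝ}

theorem continuous_integral_sub_add {E : Type*} [NormedAddCommGroup E] [NormedSpace ℝ E]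
    {f : ℝ → E} (hf : LocallyIntegrable f volume) (x : ℝ) :
    Continuous fun d => ∫ t in x - d..x + d, f t := by
  have hF := intervalIntegral.continuous_primitive hf.intervalIntegrable 0
  have hsplit (d : ℝ) : ∫ t in x - d..x + d, f t =
      (∫ t in (0 : ℝ)..x + d, f t) - ∫ t in (0 : ℝ)..x - d, f t :=
    (intervalIntegral.integral_interval_sub_left (hf.intervalIntegrable _ _)
      (hf.intervalIntegrable _ _)).symm
  simp only [hsplit]
  fun_prop

theorem pos_of_pos_integral_sub_add (hq : ∀ t, 0 ≤ q t) {x d : ℝ}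
    (h : 0 < ∫ t in x - d..x + d, q t) : 0 < d := by
  by_contra! hd
  have : 0 ≤ ∫ t in x + d..x - d, q t :=
    intervalIntegral.integral_nonneg (by linarith) fun t _ => hq t
  rw [intervalIntegral.integral_symm] at h
  linarith

theorem tendsto_integral_sub_add_atTop (hq : ∀ t, 0 ≤ q t) (hqloc : LocallyIntegrable q volume)
    (hqint : ∫⁻ t, ENNReal.ofReal (q t) = ⊤) (x : ℝ) :
    Tendsto (fun d => ∫ t in x - d..x + d, q t) atTop atTop := by
  have hcover : AECover volume atTop fun d : ℝ => Ioc (x - d) (x + d) :=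
    aecover_Ioc (tendsto_atBot_add_const_left _ x tendsto_neg_atTop_atBot)
      (tendsto_atTop_add_const_left _ x tendsto_id)
  have hlim := hcover.lintegral_tendsto_of_countably_generated
    hqloc.aestronglyMeasurable.aemeasurable.ennreal_ofReal
  rw [hqint] at hlim
  refine ENNReal.tendsto_ofReal_nhds_top.1 (hlim.congr' ?_)
  filter_upwards [eventually_ge_atTop 0] with d hd
  rw [intervalIntegral.integral_of_le (by linarith), ofReal_integral_eq_lintegral_ofReal
    (hqloc.integrableOn_isCompact isCompact_Icc |>.mono_set Ioc_subset_Icc_self)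
    (ae_of_all _ fun t => hq t)]

theorem exists_integral_sub_add_eq (hqloc : LocallyIntegrable q volume) {x a c : ℝ}
    (ha : 0 ≤ a) (hc : 0 ≤ c) (h : c ≤ ∫ t in x - a..x + a, q t) :
    ∃ d ∈ Icc 0 a, ∫ t in x - d..x + d, q t = c :=
  intermediate_value_Icc ha (continuous_integral_sub_add hqloc x).continuousOn
    ⟨by simpa using hc, h⟩

theorem dq_nonneg (x : ℝ) : 0 ≤ dq q x :=
  Real.sInf_nonneg fun _ hd => hd.1.le

theorem dq_le {x d : ℝ} (hd : 0 < d) (h : ∫ t in x - d..x + d, q t = 2) : dq q x ≤ d :=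
  csInf_le ⟨0, fun _ he => he.1.le⟩ ⟨hd, h⟩

theorem integral_dq_eq_two (hq : ∀ t, 0 ≤ q t) (hqloc : LocallyIntegrable q volume)
    (hqint : ∫⁻ t, ENNReal.ofReal (q t) = ⊤) (x : ℝ) :
    ∫ t in x - dq q x..x + dq q x, q t = 2 := by
  set S := {d : ℝ | ∫ t in x - d..x + d, q t = 2}
  have hpos {d : ℝ} (hd : d ∈ S) : 0 < d :=
    pos_of_pos_integral_sub_add hq (by rw [hd]; norm_num)
  have hS : {d : ℝ | 0 < d ∧ ∫ t in x - d..x + d, q t = 2} = S :=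
    ext fun d => ⟨And.right, fun hd => ⟨hpos hd, hd⟩⟩
  obtain ⟨a, ha0, ha⟩ := ((eventually_ge_atTop 0).and
    ((tendsto_integral_sub_add_atTop hq hqloc hqint x).eventually_ge_atTop 2)).exists
  obtain ⟨d, -, hd⟩ := exists_integral_sub_add_eq hqloc ha0 zero_le_two ha
  have hmem : sInf S ∈ S :=
    (isClosed_singleton.preimage (continuous_integral_sub_add hqloc x)).csInf_mem ⟨d, hd⟩
      ⟨0, fun _ he => (hpos he).le⟩
  rwa [dq, hS]

theorem dq_le_iff (hq : ∀ t, 0 ≤ q t) (hqloc : LocallyIntegrable q volume)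
    (hqint : ∫⁻ t, ENNReal.ofReal (q t) = ⊤) {x δ : ℝ} (hδ : 0 < δ) :
    dq q x ≤ δ ↔ 2 ≤ ∫ t in x - δ..x + δ, q t := by
  constructor
  · intro hle
    rw [← integral_dq_eq_two hq hqloc hqint x]
    exact intervalIntegral.integral_mono_interval (by linarith)
      (by linarith [dq_nonneg (q := q) x]) (by linarith) (ae_of_all _ hq)
      (hqloc.intervalIntegrable _ _)
  · intro h
    obtain ⟨d, ⟨-, hdδ⟩, hd⟩ := exists_integral_sub_add_eq hqloc hδ.le zero_le_two h
    exact (dq_le (pos_of_pos_integral_sub_add hq (by rw [hd]; norm_num)) hd).trans hdδ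

theorem tendsto_dq_nhds_zero_iff (hq : ∀ t, 0 ≤ q t) (hqloc : LocallyIntegrable q volume)
    (hqint : ∫⁻ t, ENNReal.ofReal (q t) = ⊤) {l : Filter ℝ} :
    Tendsto (dq q) l (𝓝 0) ↔ ∀ δ > 0, ∀ᶠ x in l, 2 ≤ ∫ t in x - δ..x + δ, q t := by
  refine ⟨fun h δ hδ => ?_, fun h => tendsto_order.2 ⟨fun a ha => ?_, fun a ha => ?_⟩⟩
  · filter_upwards [(tendsto_order.1 h).2 δ hδ] with x hx
    exact (dq_le_iff hq hqloc hqint hδ).1 hx.le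
  · exact Eventually.of_forall fun x => ha.trans_le (dq_nonneg x)
  · filter_upwards [h (a / 2) (half_pos ha)] with x hx
    exact ((dq_le_iff hq hqloc hqint (half_pos ha)).2 hx).trans_lt (half_lt_self ha)

theorem natCast_mul_le_integral_of_le_integral_pieces (hqloc : LocallyIntegrable q volume)
    {u h c : ℝ} (n : ℕ) (hc : ∀ k < n, c ≤ ∫ t in u + k * h..u + (k + 1) * h, q t) :
    n * c ≤ ∫ t in u..u + n * h, q t := by
  induction n with
  | zero => simp
  | succ n ih =>
    rw [← intervalIntegral.integral_add_adjacent_intervals (b := u + n * h)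
      (hqloc.intervalIntegrable _ _) (hqloc.intervalIntegrable _ _)]
    push_cast
    linarith [ih fun k hk => hc k (by omega), hc n (by omega)]

theorem natCast_mul_le_integral_sub_add (hqloc : LocallyIntegrable q volume) {x a c : ℝ}
    (ha : 0 ≤ a) {n : ℕ} (hn : 0 < n)
    (h : ∀ y ∈ closedBall x a, c ≤ ∫ t in y - a / n..y + a / n, q t) :
    n * c ≤ ∫ t in x - a..x + a, q t := by
  set δ := a / n
  have hδ : 0 ≤ δ := by positivity
  have hnδ : n * δ = a := mul_div_cancel₀ a (by positivity)
  have hpieces := natCast_mul_le_integral_of_le_integral_pieces hqloc (u := x - a) (h := 2 * δ)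
    n fun k hk => by
      have hk' : (k : ℝ) + 1 ≤ n := by exact_mod_cast hk
      have hy : x - a + (2 * k + 1) * δ ∈ closedBall x a := by
        rw [mem_closedBall, Real.dist_eq, abs_le]
        constructor <;> nlinarith
      convert h _ hy using 2 <;> ring
  convert hpieces using 2
  linarith

theorem tendsto_integral_sub_add_cocompact_atTop_iff (hqloc : LocallyIntegrable q volume)
    {c : ℝ} (hc : 0 < c) :
    (∀ a : ℝ, 0 < a → Tendsto (fun x => ∫ t in x - a..x + a, q t) (cocompact ℝ) atTop) ↔
      ∀ δ : ℝ, 0 < δ → ∀ᶠ x in cocompact ℝ, c ≤ ∫ t in x - δ..x + δ, q t := by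
  refine ⟨fun h δ hδ => (h δ hδ).eventually_ge_atTop c, fun h a ha => ?_⟩
  simp_rw [← cobounded_eq_cocompact] at h ⊢
  refine tendsto_atTop.2 fun M => ?_
  obtain ⟨n, hn⟩ := exists_nat_ge (M / c)
  have hsmall := h (a / (n + 1 : ℕ)) (by positivity)
  filter_upwards [eventually_cobounded_forall_closedBall hsmall a] with x hx
  calc M ≤ (n + 1 : ℕ) * c := by
        push_cast
        nlinarith [(div_le_iff₀ hc).1 hn]
    _ ≤ _ := natCast_mul_le_integral_sub_add hqloc ha.le n.succ_pos hx

theorem stmt5 (q : ℝ → ℝ) (hq : ∀ x, 0 ≤ q x)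
    (hqloc : LocallyIntegrable q volume)
    (hqint : ∫⁻ x : ℝ, ENNReal.ofReal (q x) = ⊤) :
    (∀ a : ℝ, 0 < a →
        Tendsto (fun x : ℝ => ∫ t in x - a..x + a, q t) (cocompact ℝ) atTop) ↔
      Tendsto (dq q) (cocompact ℝ) (𝓝 0) := by
  rw [tendsto_dq_nhds_zero_iff hq hqloc hqint]
  exact tendsto_integral_sub_add_cocompact_atTop_iff hqloc two_pos
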